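/- Define Φ : ℝ⁵ → ℝ⁵ by Φ(x,y,z,p,q) = (x₁,y₁,z₁,p₁,q₁) where x₁ = (3x−p)/4, y₁ = −(12^{2/3}/8)·y, z₁ = (z − xp + (3/2)x²)/4, p₁ = x, q₁ = −(12^{1/3}/6)·q. Then Φ is a bijection of ℝ⁵ (indeed a smooth diffeomorphism with polynomial inverse), and for every point m = (x,y,z,p,q) ∈ ℝ⁵ and every tangent vector v = (v_x,v_y,v_z,v_p,v_q) ∈ ℝ⁵, the differentials at m satisfy Dz₁(v) − p₁(m)·Dx₁(v) − q₁(m)·Dy₁(v) = (1/4)·(v_z − p·v_x − q·v_y), where Df(v) denotes the Fréchet derivative of the component function f at m applied to v. -/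

import Mathlib

noncomputable section

/-- Points of `ℝ⁵`, with coordinates `(x, y, z, p, q)`. -/
abbrev R5 : Type := ℝ × ℝ × ℝ × ℝ × ℝ

namespace Stmt9

/-- First component `x₁ = (3x − p)/4` of the coordinate diffeomorphism. -/
def x₁ (m : R5) : ℝ := (3 * m.1 - m.2.2.2.1) / 4
/-- Second component `y₁ = −(12^{2/3}/8)·y`. -/
def y₁ (m : R5) : ℝ := -((12 : ℝ) ^ ((2 : ℝ) / 3) / 8) * m.2.1
/-- Third component `z₁ = (z − xp + (3/2)x²)/4`. -/
def z₁ (m : R5) : ℝ := (m.2.2.1 - m.1 * m.2.2.2.1 + 3 / 2 * m.1 ^ 2) / 4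
/-- Fourth component `p₁ = x`. -/
def p₁ (m : R5) : ℝ := m.1
/-- Fifth component `q₁ = −(12^{1/3}/6)·q`. -/
def q₁ (m : R5) : ℝ := -((12 : ℝ) ^ ((1 : ℝ) / 3) / 6) * m.2.2.2.2

/-- The coordinate diffeomorphism `Φ` from the non-standard contact structure associated to
the parametrization `(t,H) = (2s^{1/3}/(s+2), -4s^{2/3}/(s+2))` to the standard one. -/
def Φ (m : R5) : R5 := (x₁ m, y₁ m, z₁ m, p₁ m, q₁ m)

end Stmt9

open Stmt9

def P1 : R5 →L[ℝ] ℝ := ContinuousLinearMap.fst ℝ ℝ (ℝ × ℝ × ℝ × ℝ)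
def P2 : R5 →L[ℝ] ℝ :=
  (ContinuousLinearMap.fst ℝ ℝ (ℝ × ℝ × ℝ)).comp (ContinuousLinearMap.snd ℝ ℝ (ℝ × ℝ × ℝ × ℝ))
def P3 : R5 →L[ℝ] ℝ :=
  ((ContinuousLinearMap.fst ℝ ℝ (ℝ × ℝ)).comp (ContinuousLinearMap.snd ℝ ℝ (ℝ × ℝ × ℝ))).comp
    (ContinuousLinearMap.snd ℝ ℝ (ℝ × ℝ × ℝ × ℝ))
def P4 : R5 →L[ℝ] ℝ :=
  (((ContinuousLinearMap.fst ℝ ℝ ℝ).comp (ContinuousLinearMap.snd ℝ ℝ (ℝ × ℝ))).comp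
    (ContinuousLinearMap.snd ℝ ℝ (ℝ × ℝ × ℝ))).comp (ContinuousLinearMap.snd ℝ ℝ (ℝ × ℝ × ℝ × ℝ))
def P5 : R5 →L[ℝ] ℝ :=
  (((ContinuousLinearMap.snd ℝ ℝ ℝ).comp (ContinuousLinearMap.snd ℝ ℝ (ℝ × ℝ))).comp
    (ContinuousLinearMap.snd ℝ ℝ (ℝ × ℝ × ℝ))).comp (ContinuousLinearMap.snd ℝ ℝ (ℝ × ℝ × ℝ × ℝ))


/-- `Φ` is a smooth bijection of `ℝ⁵` and pulls back the standard contact form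
`dz₁ − p₁dx₁ − q₁dy₁` to `(1/4)·(dz − pdx − qdy)`. -/
theorem coordinate_diffeo_pullback_contact_form_one :
    Function.Bijective Φ ∧ ContDiff ℝ (⊤ : ℕ∞) Φ ∧
    ∀ m v : R5,
      fderiv ℝ z₁ m v - p₁ m * fderiv ℝ x₁ m v - q₁ m * fderiv ℝ y₁ m v
        = (1 / 4) * (v.2.2.1 - m.2.2.2.1 * v.1 - m.2.2.2.2 * v.2.1) := by
  have hc2 : ((12 : ℝ) ^ ((2 : ℝ) / 3)) ≠ 0 := by positivity
  have hc1 : ((12 : ℝ) ^ ((1 : ℝ) / 3)) ≠ 0 := by positivity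
  refine ⟨?_, ?_, ?_⟩
  · rw [Function.bijective_iff_has_inverse]
    refine ⟨fun m => (m.2.2.2.1, -8 / (12 : ℝ) ^ ((2 : ℝ) / 3) * m.2.1,
      4 * m.2.2.1 + m.2.2.2.1 * (3 * m.2.2.2.1 - 4 * m.1) - 3 / 2 * m.2.2.2.1 ^ 2,
      3 * m.2.2.2.1 - 4 * m.1, -6 / (12 : ℝ) ^ ((1 : ℝ) / 3) * m.2.2.2.2), ?_, ?_⟩
    · rintro ⟨x, y, z, p, q⟩
      simp only [Φ, x₁, y₁, z₁, p₁, q₁]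
      refine Prod.ext ?_ (Prod.ext ?_ (Prod.ext ?_ (Prod.ext ?_ ?_))) <;> field_simp <;> ring
    · rintro ⟨x, y, z, p, q⟩
      simp only [Φ, x₁, y₁, z₁, p₁, q₁]
      refine Prod.ext ?_ (Prod.ext ?_ (Prod.ext ?_ (Prod.ext ?_ ?_))) <;> field_simp <;> ring
  · unfold Φ x₁ y₁ z₁ p₁ q₁
    fun_prop (disch := norm_num)
  · intro m v
    have hx : HasFDerivAt (fun m : R5 => m.1) P1 m := P1.hasFDerivAt
    have hy : HasFDerivAt (fun m : R5 => m.2.1) P2 m := P2.hasFDerivAt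
    have hz : HasFDerivAt (fun m : R5 => m.2.2.1) P3 m := P3.hasFDerivAt
    have hp : HasFDerivAt (fun m : R5 => m.2.2.2.1) P4 m := P4.hasFDerivAt
    have ex : fderiv ℝ x₁ m v = (3 * v.1 - v.2.2.2.1) / 4 := by
      have h := (((hx.const_mul 3).sub hp).mul_const (1 / 4 : ℝ)).fderiv
      have hfun : x₁ = fun m : R5 => (3 * m.1 - m.2.2.2.1) * (1 / 4) := by
        funext m; simp only [x₁]; ring
      rw [hfun, show fderiv ℝ (fun m : R5 => (3 * m.1 - m.2.2.2.1) * (1 / 4)) m = _ from h]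
      simp [P1, P4]
      ring
    have ey : fderiv ℝ y₁ m v = -((12 : ℝ) ^ ((2 : ℝ) / 3) / 8) * v.2.1 := by
      have := (hy.const_mul (-((12 : ℝ) ^ ((2 : ℝ) / 3) / 8))).fderiv
      rw [show y₁ = fun m : R5 => -((12 : ℝ) ^ ((2 : ℝ) / 3) / 8) * m.2.1 from rfl, this]
      simp [P2]
    have ez : fderiv ℝ z₁ m v
        = (v.2.2.1 - (m.1 * v.2.2.2.1 + m.2.2.2.1 * v.1) + 3 / 2 * (2 * m.1 * v.1)) / 4 := by
      have h := (((hz.sub (hx.mul hp)).add ((hx.mul hx).const_mul (3 / 2))).mul_const (1 / 4 : ℝ)).fderiv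
      have hfun : z₁ = fun m : R5 =>
          (m.2.2.1 - m.1 * m.2.2.2.1 + 3 / 2 * (m.1 * m.1)) * (1 / 4) := by
        funext m; simp only [z₁]; ring
      rw [hfun, show fderiv ℝ (fun m : R5 =>
        (m.2.2.1 - m.1 * m.2.2.2.1 + 3 / 2 * (m.1 * m.1)) * (1 / 4)) m = _ from h]
      simp [P1, P3, P4]
      ring
    have h12 : (12 : ℝ) ^ ((1 : ℝ) / 3) * 12 ^ ((2 : ℝ) / 3) = 12 := by
      rw [← Real.rpow_add (by norm_num)]; norm_num
    rw [ex, ey, ez, p₁, q₁]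
    linear_combination (-(m.2.2.2.2 * v.2.1) / 48) * h12
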